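/- arXiv:2109.10012 — 3 statements merged into one kernel-verified Lean document; each statement's English description precedes it below -/
import Mathlib

section
/- For every Farey word s = s_1…s_m of length m ≥ 2, the lexicographically largest cyclic rotation of s is the reversal of s: L(s) = s_m s_{m-1} … s_1. Moreover, the lexicographically smallest cyclic rotation of s is s itself (so every non-degenerate Farey word is Lyndon). -/
/-- The cyclic rotation of a binary word `c` by `i`: `c_{i+1}…c_m c_1…c_i`. -/
def rot (c : List Bool) (i : ℕ) : List Bool := c.drop i ++ c.take i

/-- The lexicographically largest cyclic rotation `L(s)` of `s`. -/
def maxRot (s : List Bool) : List Bool :=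
  (List.range s.length).foldl (fun acc i => max acc (rot s i)) s

/-- The lexicographically smallest cyclic rotation `S(s)` of `s`. -/
def minRot (s : List Bool) : List Bool :=
  (List.range s.length).foldl (fun acc i => min acc (rot s i)) s

/-- A binary word is Lyndon if every proper suffix is strictly lexicographically
greater than the prefix of the same length. -/
def IsLyndon (s : List Bool) : Prop :=
  ∀ i, 0 < i → i < s.length → s.take (s.length - i) < s.drop i

/-- One step of the Farey-word construction: insert `w v` between neighbors `w, v`. -/
def fareyStep : List (List Bool) → List (List Bool)
  | [] => []
  | [w] => [w]
  | w :: v :: rest => w :: (w ++ v) :: fareyStep (v :: rest)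

/-- The ordered sets `F_n` of Farey words, with `F_0 = (0, 1)`. -/
def farey : ℕ → List (List Bool)
  | 0 => [[false], [true]]
  | n + 1 => fareyStep (farey n)

/-- A Farey word is an element of some `F_n`. -/
def IsFarey (w : List Bool) : Prop := ∃ n, w ∈ farey n

/-- A non-degenerate Farey word: a Farey word other than the single letters `0` and `1`,
equivalently of length at least two. -/
def IsFareyND (w : List Bool) : Prop := IsFarey w ∧ 2 ≤ w.length


lemma lex_lt {x y : List Bool} (h : List.Lex (· < ·) x y) : x < y := h
lemma lt_lex {x y : List Bool} (h : x < y) : List.Lex (· < ·) x y := h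

lemma lt_append_right (x : List Bool) {y : List Bool} (hy : y ≠ []) : x < x ++ y := by
  induction x with
  | nil =>
    cases y with
    | nil => exact absurd rfl hy
    | cons a t => exact lex_lt List.Lex.nil
  | cons a x ih => exact lex_lt (List.Lex.cons (lt_lex (ih)))

lemma lt_mid (r x y : List Bool) : r ++ false :: x < r ++ true :: y := by
  induction r with
  | nil => exact lex_lt (List.Lex.rel (by decide))
  | cons a r ih => exact lex_lt (List.Lex.cons (lt_lex ih))

lemma append_lt_append_left (u : List Bool) {p q : List Bool} (h : p < q) :
    u ++ p < u ++ q := by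
  induction u with
  | nil => exact h
  | cons a u ih => exact lex_lt (List.Lex.cons (lt_lex ih))

lemma lt_decomp {x y : List Bool} (h : x < y) :
    (∃ z, z ≠ [] ∧ y = x ++ z) ∨
    ∃ r x' y', x = r ++ false :: x' ∧ y = r ++ true :: y' := by
  have h' : List.Lex (· < ·) x y := h
  clear h
  induction h' with
  | nil => exact Or.inl ⟨_, List.cons_ne_nil _ _, rfl⟩
  | @rel a l₁ b l₂ hab =>
    have hab' : a = false ∧ b = true := by revert hab; cases a <;> cases b <;> decide
    right
    exact ⟨[], l₁, l₂, by rw [hab'.1]; rfl, by rw [hab'.2]; rfl⟩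
  | @cons a l₁ l₂ h ih =>
    rcases ih with ⟨z, hz, e⟩ | ⟨r, x', y', e1, e2⟩
    · exact Or.inl ⟨z, hz, by rw [e]; rfl⟩
    · exact Or.inr ⟨a :: r, x', y', by rw [e1]; rfl, by rw [e2]; rfl⟩

lemma lt_diff {x y : List Bool} (h : x < y) (hlen : y.length ≤ x.length) :
    ∃ r x' y', x = r ++ false :: x' ∧ y = r ++ true :: y' := by
  rcases lt_decomp h with ⟨z, hz, e⟩ | hd
  · subst e
    simp only [List.length_append] at hlen
    have := List.length_pos_iff.mpr hz
    omega
  · exact hd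

lemma comp_lt {x y : List Bool} (hlen : y.length ≤ x.length) (h : x < y) :
    y.map not < x.map not := by
  obtain ⟨r, x', y', e1, e2⟩ := lt_diff h hlen
  subst e1; subst e2
  simp only [List.map_append, List.map_cons, Bool.not_false, Bool.not_true]
  exact lt_mid _ _ _

lemma comp_le {x y : List Bool} (hlen : x.length = y.length) (h : x ≤ y) :
    y.map not ≤ x.map not := by
  rcases eq_or_lt_of_le h with rfl | hlt
  · exact le_refl _
  · exact le_of_lt (comp_lt hlen.ge hlt)

lemma rot_length (c : List Bool) (i : ℕ) : (rot c i).length = c.length := by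
  simp [rot]; omega

lemma rot_zero (c : List Bool) : rot c 0 = c := by simp [rot]

lemma rot_full {c : List Bool} {i : ℕ} (h : c.length ≤ i) : rot c i = c := by
  simp [rot, List.drop_eq_nil_of_le h, List.take_of_length_le h]

lemma rot_map_not (c : List Bool) (i : ℕ) : rot (c.map not) i = (rot c i).map not := by
  simp [rot, List.map_drop, List.map_take]

lemma rot_rot {w : List Bool} {a b : ℕ} (ha : a ≤ w.length) (hb : b ≤ w.length) :
    ∃ c ≤ w.length, rot (rot w a) b = rot w c := by
  by_cases hab : a + b ≤ w.length
  · refine ⟨a + b, hab, ?_⟩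
    simp only [rot, List.drop_append, List.take_append,
      List.length_drop, List.drop_drop, List.take_take]
    have h1 : b - (w.length - a) = 0 := by omega
    rw [h1]
    simp only [List.drop_zero, List.take_zero, List.append_nil]
    have h0 : (0 : ℕ) ⊓ a = 0 := by simp
    rw [h0]
    simp only [List.take_zero, List.append_nil]
    rw [List.take_add, List.append_assoc]
  · refine ⟨a + b - w.length, by omega, ?_⟩
    set c := a + b - w.length with hc
    simp only [rot, List.drop_append, List.take_append,
      List.length_drop, List.drop_drop]
    have h1 : b - (w.length - a) = c := by omega
    have h2 : w.length - a ≤ b := by omega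
    have h2' : w.length ≤ b + a := by omega
    have e1 : List.drop (a + b) w = ([] : List Bool) := List.drop_eq_nil_of_le (by omega)
    have e2 : (w.drop a).take b = w.drop a := List.take_of_length_le (by simpa using h2)
    rw [h1, e1, e2]
    have h3 : w.drop c = (w.take a).drop c ++ w.drop a := by
      conv_lhs => rw [← List.take_append_drop a w]
      rw [List.drop_append, List.length_take]
      have : c - min a w.length = 0 := by omega
      rw [this, List.drop_zero]
    have h4 : w.take c = (w.take a).take c := by
      conv_lhs => rw [← List.take_append_drop a w]
      rw [List.take_append, List.length_take]
      have : c - min a w.length = 0 := by omega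
      rw [this, List.take_zero, List.append_nil]
    rw [h3, h4, List.nil_append, List.append_assoc]

lemma foldl_min_eq {g : ℕ → List Bool} {init : List Bool} {l : List ℕ}
    (h : ∀ i ∈ l, init ≤ g i) :
    l.foldl (fun acc i => min acc (g i)) init = init := by
  induction l with
  | nil => rfl
  | cons a l ih =>
    simp only [List.foldl_cons]
    rw [min_eq_left (h a (by simp))]
    exact ih (fun i hi => h i (by simp [hi]))

lemma foldl_max_le {g : ℕ → List Bool} {M init : List Bool} {l : List ℕ}
    (h0 : init ≤ M) (h : ∀ i ∈ l, g i ≤ M) :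
    l.foldl (fun acc i => max acc (g i)) init ≤ M := by
  induction l generalizing init with
  | nil => exact h0
  | cons a l ih =>
    simp only [List.foldl_cons]
    exact ih (max_le h0 (h a (by simp))) (fun i hi => h i (by simp [hi]))

lemma le_foldl_max {g : ℕ → List Bool} {l : List ℕ} {M : List Bool} {init : List Bool}
    (h : M ≤ init ∨ ∃ i ∈ l, M ≤ g i) :
    M ≤ l.foldl (fun acc i => max acc (g i)) init := by
  induction l generalizing init with
  | nil =>
    rcases h with h | ⟨i, hi, _⟩
    · exact h
    · simp at hi
  | cons a l ih =>
    simp only [List.foldl_cons]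
    rcases h with h | ⟨i, hi, hgi⟩
    · exact ih (Or.inl (le_trans h (le_max_left _ _)))
    · rcases List.mem_cons.mp hi with rfl | hi'
      · exact ih (Or.inl (le_trans hgi (le_max_right _ _)))
      · exact ih (Or.inr ⟨i, hi', hgi⟩)

lemma lyndon_lt_rot {w : List Bool} (h : IsLyndon w) {j : ℕ} (hj0 : 0 < j)
    (hj : j < w.length) : w < rot w j := by
  have hL := h j hj0 hj
  have hlen : (w.drop j).length ≤ (w.take (w.length - j)).length := by
    simp [List.length_take, List.length_drop]
  obtain ⟨r, x', y', e1, e2⟩ := lt_diff hL hlen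
  have ew : w = r ++ false :: (x' ++ w.drop (w.length - j)) := by
    conv_lhs => rw [← List.take_append_drop (w.length - j) w]
    rw [e1]; simp
  have er : rot w j = r ++ true :: (y' ++ w.take j) := by
    rw [rot, e2]; simp
  rw [er]
  conv_lhs => rw [ew]
  exact lt_mid _ _ _

lemma lyndon_le_rot {w : List Bool} (h : IsLyndon w) (j : ℕ) : w ≤ rot w j := by
  rcases le_or_gt w.length j with hj | hj
  · exact le_of_eq (rot_full hj).symm
  rcases Nat.eq_zero_or_pos j with rfl | hj0
  · exact le_of_eq (rot_zero w).symm
  exact le_of_lt (lyndon_lt_rot h hj0 hj)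

lemma take_shape {r : List Bool} {c : Bool} {t : List Bool} {m : ℕ} (h : r.length < m) :
    (r ++ c :: t).take m = r ++ c :: t.take (m - r.length - 1) := by
  rw [List.take_append, List.take_of_length_le (le_of_lt h),
    (show m - r.length = (m - r.length - 1) + 1 by omega)]
  rfl

lemma take_shape_le {r : List Bool} {c : Bool} {t : List Bool} {m : ℕ} (h : m ≤ r.length) :
    (r ++ c :: t).take m = r.take m := by
  rw [List.take_append, Nat.sub_eq_zero_of_le h]
  simp

lemma lyndon_concat {a b : List Bool} (ha : IsLyndon a) (hb : IsLyndon b)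
    (hane : a ≠ []) (hab : a ++ b < b) : IsLyndon (a ++ b) := by
  intro i hi0 hin
  have hlen_w : (a ++ b).length = a.length + b.length := by simp
  have hapos : 0 < a.length := List.length_pos_iff.mpr hane
  obtain ⟨r, x, y, hx, hy⟩ := lt_diff hab (by simp)
  have hr : r.length < b.length := by
    have := congrArg List.length hy; simp at this; omega
  have key2 : ∀ M, r.length < M →
      (a ++ b).take M = r ++ false :: x.take (M - r.length - 1) := fun M hM => by
    rw [hx, take_shape hM]
  have keyb : ∀ M, r.length < M →
      b.take M = r ++ true :: y.take (M - r.length - 1) := fun M hM => by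
    rw [hy, take_shape hM]
  have keyeq : ∀ M, M ≤ r.length → (a ++ b).take M = b.take M := fun M hM => by
    rw [hx, hy, take_shape_le hM, take_shape_le hM]
  rcases lt_or_ge i a.length with hia | hia
  · -- i < |a|
    have hℓ := ha i hi0 hia
    obtain ⟨r2, x2, y2, e1, e2⟩ := lt_diff hℓ (by simp)
    have hdropi : (a ++ b).drop i = r2 ++ true :: (y2 ++ b) := by
      rw [List.drop_append, Nat.sub_eq_zero_of_le (le_of_lt hia),
        List.drop_zero, e2, List.append_assoc]
      rfl
    have htakei : ∃ tl, (a ++ b).take ((a ++ b).length - i) = r2 ++ false :: tl := by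
      set X := (a ++ b).take ((a ++ b).length - i) with hX
      refine ⟨x2 ++ X.drop (a.length - i), ?_⟩
      have h1 : min (a.length - i) ((a ++ b).length - i) = a.length - i :=
        min_eq_left (by omega)
      have key : X.take (a.length - i) = a.take (a.length - i) := by
        rw [hX, List.take_take, h1, List.take_append_of_le_length (by omega)]
      conv_lhs => rw [← List.take_append_drop (a.length - i) X]
      rw [key, e1, List.append_assoc]
      rfl
    obtain ⟨tl, htakei⟩ := htakei
    rw [htakei, hdropi]
    exact lt_mid _ _ _
  · -- |a| ≤ i
    have hi'b : i - a.length < b.length := by omega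
    have hdropi : (a ++ b).drop i = b.drop (i - a.length) := by
      rw [List.drop_append, List.drop_eq_nil_of_le hia, List.nil_append]
    have hmn : (a ++ b).length - i = b.length - (i - a.length) := by omega
    rcases Nat.eq_zero_or_pos (i - a.length) with hz | hpos
    · -- i = |a|
      rw [hmn, hz, Nat.sub_zero, key2 _ hr, hdropi, hz, List.drop_zero, hy]
      exact lt_mid _ _ _
    · have hbL := hb (i - a.length) hpos hi'b
      rcases lt_or_ge r.length (b.length - (i - a.length)) with hrm | hrm
      · rw [hmn, key2 _ hrm, hdropi]
        calc r ++ false :: x.take (b.length - (i - a.length) - r.length - 1)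
            < r ++ true :: y.take (b.length - (i - a.length) - r.length - 1) := lt_mid _ _ _
          _ = b.take (b.length - (i - a.length)) := (keyb _ hrm).symm
          _ < b.drop (i - a.length) := hbL
      · rw [hmn, keyeq _ hrm, hdropi]
        exact hbL

lemma rep_shift (m : ℕ) (x : Bool) (l : List Bool) :
    List.replicate m x ++ x :: l = x :: (List.replicate m x ++ l) := by
  induction m with
  | zero => rfl
  | succ m ih => simp only [List.replicate_succ, List.cons_append, ih]

def PInv (u v : List Bool) : Prop :=
  (∃ k, u = [false] ∧ v = List.replicate k false ++ [true]) ∨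
  (∃ k, u = false :: List.replicate k true ∧ v = [true]) ∨
  (∃ s t : List Bool, u = false :: s ++ [true] ∧ v = false :: t ++ [true] ∧
    s ++ true :: false :: t = t ++ false :: true :: s ∧ s.reverse = s ∧ t.reverse = t)

def CI (u v : List Bool) : Prop := PInv u v ∧ u < v ∧ u ++ v < v

lemma PInv_une {u v : List Bool} (h : PInv u v) : u ≠ [] := by
  rcases h with ⟨k, rfl, _⟩ | ⟨k, rfl, _⟩ | ⟨s, t, rfl, _⟩ <;> simp

lemma PInv_vne {u v : List Bool} (h : PInv u v) : v ≠ [] := by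
  rcases h with ⟨k, _, rfl⟩ | ⟨k, _, rfl⟩ | ⟨s, t, _, rfl, _⟩ <;> simp

lemma HL {s t : List Bool} (H : s ++ true :: false :: t = t ++ false :: true :: s)
    (l : List Bool) : s ++ true :: false :: (t ++ l) = t ++ false :: true :: (s ++ l) := by
  have := congrArg (· ++ l) H
  simpa [List.append_assoc] using this

lemma pal_mid {s t : List Bool} (H : s ++ true :: false :: t = t ++ false :: true :: s)
    (hs : s.reverse = s) (ht : t.reverse = t) :
    (s ++ true :: false :: t).reverse = s ++ true :: false :: t := by
  have h1 : (s ++ true :: false :: t).reverse = t ++ false :: true :: s := by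
    simp [hs, ht, List.append_assoc]
  rw [h1, ← H]

lemma PInv_left {u v : List Bool} (h : PInv u v) : PInv u (u ++ v) := by
  rcases h with ⟨k, rfl, rfl⟩ | ⟨k, rfl, rfl⟩ | ⟨s, t, rfl, rfl, H, hs, ht⟩
  · exact Or.inl ⟨k + 1, rfl, by simp [List.replicate_succ]⟩
  · cases k with
    | zero => exact Or.inl ⟨1, rfl, by simp⟩
    | succ k' =>
      refine Or.inr (Or.inr ⟨List.replicate k' true, List.replicate (k' + 1) true,
        ?_, ?_, ?_, ?_, ?_⟩)
      · rw [List.replicate_succ']; rfl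
      · rfl
      · simp only [List.replicate_succ, List.cons_append, rep_shift]
      · simp
      · simp
  · refine Or.inr (Or.inr ⟨s, s ++ true :: false :: t, rfl, ?_, ?_, hs, pal_mid H hs ht⟩)
    · simp [List.append_assoc]
    · simp only [List.append_assoc, List.cons_append]
      rw [H]

lemma PInv_right {u v : List Bool} (h : PInv u v) : PInv (u ++ v) v := by
  rcases h with ⟨k, rfl, rfl⟩ | ⟨k, rfl, rfl⟩ | ⟨s, t, rfl, rfl, H, hs, ht⟩
  · cases k with
    | zero => exact Or.inr (Or.inl ⟨1, by rfl, rfl⟩)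
    | succ k' =>
      refine Or.inr (Or.inr ⟨List.replicate (k' + 1) false, List.replicate k' false,
        ?_, ?_, ?_, ?_, ?_⟩)
      · simp [List.replicate_succ]
      · simp [List.replicate_succ]
      · simp only [List.replicate_succ, List.cons_append, rep_shift]
      · simp
      · simp
  · exact Or.inr (Or.inl ⟨k + 1, by simp [List.replicate_succ'], rfl⟩)
  · refine Or.inr (Or.inr ⟨s ++ true :: false :: t, t, ?_, rfl, ?_, pal_mid H hs ht, ht⟩)
    · simp [List.append_assoc]
    · simp only [List.append_assoc, List.cons_append]
      rw [HL H (true :: false :: t)]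

lemma CI_left {u v : List Bool} (h : CI u v) : CI u (u ++ v) :=
  ⟨PInv_left h.1, lt_append_right u (PInv_vne h.1), append_lt_append_left u h.2.2⟩

lemma CI_right {u v : List Bool} (h : CI u v) : CI (u ++ v) v := by
  refine ⟨PInv_right h.1, h.2.2, ?_⟩
  obtain ⟨r, x, y, hx, hy⟩ := lt_diff h.2.2 (by simp)
  rw [hx, hy, List.append_assoc]
  exact lt_mid _ _ _

lemma fareyStep_cons_cons (w v : List Bool) (rest : List (List Bool)) :
    fareyStep (w :: v :: rest) = w :: (w ++ v) :: fareyStep (v :: rest) := rfl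

lemma fareyStep_head (v : List Bool) (rest : List (List Bool)) :
    ∃ tl, fareyStep (v :: rest) = v :: tl := by
  cases rest with
  | nil => exact ⟨[], rfl⟩
  | cons w r => exact ⟨_, rfl⟩

lemma chain'_fareyStep : ∀ {l}, List.Chain' CI l → List.Chain' CI (fareyStep l) := by
  intro l h
  induction l with
  | nil => exact h
  | cons x xs ih =>
    cases xs with
    | nil => exact h
    | cons y rest =>
      obtain ⟨tl, htl⟩ := fareyStep_head y rest
      have hxy : CI x y := (List.isChain_cons_cons.mp h).1
      have hrest : List.Chain' CI (fareyStep (y :: rest)) := ih (List.isChain_cons_cons.mp h).2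
      rw [fareyStep_cons_cons, List.Chain', List.isChain_cons_cons]
      refine ⟨CI_left hxy, ?_⟩
      rw [htl, List.isChain_cons_cons]
      exact ⟨CI_right hxy, htl ▸ hrest⟩

lemma mem_fareyStep_ind {P : List Bool → Prop}
    (hP : ∀ u v, CI u v → P u → P v → P (u ++ v)) :
    ∀ {l}, List.Chain' CI l → (∀ w ∈ l, P w) → ∀ w ∈ fareyStep l, P w := by
  intro l
  induction l with
  | nil => intro _ _ w hw; exact absurd hw (by simp [fareyStep])
  | cons x xs ih =>
    cases xs with
    | nil => intro h hall w hw; exact hall w (by simpa [fareyStep] using hw)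
    | cons y rest =>
      intro h hall w hw
      rw [fareyStep_cons_cons] at hw
      rcases List.mem_cons.mp hw with rfl | hw
      · exact hall _ (by simp)
      rcases List.mem_cons.mp hw with rfl | hw
      · exact hP x y (List.isChain_cons_cons.mp h).1 (hall x (by simp)) (hall y (by simp))
      · exact ih (List.isChain_cons_cons.mp h).2
          (fun w' hw' => hall w' (List.mem_cons_of_mem _ hw')) w hw

lemma chain_farey : ∀ n, List.Chain' CI (farey n) := by
  intro n
  induction n with
  | zero =>
    rw [show farey 0 = [[false], [true]] from rfl, List.Chain', List.isChain_cons_cons]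
    refine ⟨⟨Or.inl ⟨0, rfl, rfl⟩, by decide, by decide⟩, ?_⟩
    simp
  | succ n ih => exact chain'_fareyStep ih

def Conj (w : List Bool) : Prop := ∃ k ≤ w.length, rot w k = w.reverse

lemma conj_of_PInv {u v : List Bool} (h : PInv u v) : Conj (u ++ v) := by
  rcases h with ⟨k, rfl, rfl⟩ | ⟨k, rfl, rfl⟩ | ⟨s, t, rfl, rfl, H, hs, ht⟩
  · have hw : [false] ++ (List.replicate k false ++ [true])
        = List.replicate (k + 1) false ++ [true] := by simp [List.replicate_succ]
    rw [hw]
    have l1 : (List.replicate (k + 1) false).length = k + 1 := by simp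
    refine ⟨k + 1, by simp, ?_⟩
    rw [rot, List.drop_left' l1, List.take_left' l1]
    simp
  · have hw : (false :: List.replicate k true) ++ [true]
        = false :: List.replicate (k + 1) true := by simp [List.replicate_succ']
    rw [hw]
    refine ⟨1, by simp, ?_⟩
    rw [rot]
    simp
  · have form2 : (false :: s ++ [true]) ++ (false :: t ++ [true])
        = (false :: (t ++ [false])) ++ (true :: (s ++ [true])) := by
      simp only [List.cons_append, List.append_assoc, List.singleton_append, List.nil_append]
      rw [HL H [true]]
    rw [form2]
    have l1 : (false :: (t ++ [false])).length = t.length + 2 := by simp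
    refine ⟨t.length + 2, by simp, ?_⟩
    rw [rot, List.drop_left' l1, List.take_left' l1]
    have hrev : ((false :: (t ++ [false])) ++ (true :: (s ++ [true]))).reverse
        = (true :: (s ++ [true])).reverse ++ (false :: (t ++ [false])).reverse := by
      simp
    rw [hrev]
    have r1 : (true :: (s ++ [true])).reverse = true :: (s ++ [true]) := by
      simp [hs, List.append_assoc]
    have r2 : (false :: (t ++ [false])).reverse = false :: (t ++ [false]) := by
      simp [ht, List.append_assoc]
    rw [r1, r2]

def fcomp (w : List Bool) : List Bool := (w.map not).reverse

lemma fcomp_append (a b : List Bool) : fcomp (a ++ b) = fcomp b ++ fcomp a := by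
  simp [fcomp]

lemma fareyStep_append_two : ∀ (l : List (List Bool)) (b a : List Bool),
    fareyStep (l ++ [b, a]) = fareyStep (l ++ [b]) ++ [b ++ a, a] := by
  intro l
  induction l with
  | nil => intro b a; rfl
  | cons x xs ih =>
    intro b a
    cases xs with
    | nil => rfl
    | cons y rest =>
      show x :: (x ++ y) :: fareyStep ((y :: rest) ++ [b, a])
          = (x :: (x ++ y) :: fareyStep ((y :: rest) ++ [b])) ++ [b ++ a, a]
      rw [ih]
      rfl

lemma map_fcomp_fareyStep : ∀ l, (fareyStep l).map fcomp
    = (fareyStep ((l.map fcomp).reverse)).reverse := by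
  intro l
  induction l with
  | nil => rfl
  | cons x xs ih =>
    cases xs with
    | nil => rfl
    | cons y rest =>
      have lhs : (fareyStep (x :: y :: rest)).map fcomp
          = fcomp x :: (fcomp y ++ fcomp x) :: (fareyStep (((y :: rest).map fcomp).reverse)).reverse := by
        rw [fareyStep_cons_cons, List.map_cons, List.map_cons, fcomp_append, ih]
      rw [lhs]
      have e1 : ((x :: y :: rest).map fcomp).reverse
          = ((rest.map fcomp).reverse ++ [fcomp y]) ++ [fcomp x] := by
        simp
      rw [e1, List.append_assoc]
      show _ = (fareyStep ((rest.map fcomp).reverse ++ [fcomp y, fcomp x])).reverse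
      rw [fareyStep_append_two]
      have e2 : ((y :: rest).map fcomp).reverse = (rest.map fcomp).reverse ++ [fcomp y] := by
        simp
      rw [← e2]
      simp
lemma farey_symm : ∀ n, (farey n).map fcomp = (farey n).reverse := by
  intro n
  induction n with
  | zero => rfl
  | succ n ih =>
    show (fareyStep (farey n)).map fcomp = (fareyStep (farey n)).reverse
    rw [map_fcomp_fareyStep, ih, List.reverse_reverse]

lemma farey_all : ∀ n, ∀ w ∈ farey n, IsLyndon w ∧ Conj w := by
  intro n
  induction n with
  | zero =>
    intro w hw
    have hw' : w = [false] ∨ w = [true] := by simpa [farey] using hw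
    rcases hw' with rfl | rfl <;>
      exact ⟨fun i h1 h2 => by simp at h2; omega, ⟨0, by simp, by simp [rot]⟩⟩
  | succ n ih =>
    exact mem_fareyStep_ind
      (fun u v hCI hu hv =>
        ⟨lyndon_concat hu.1 hv.1 (PInv_une hCI.1) hCI.2.2, conj_of_PInv hCI.1⟩)
      (chain_farey n) ih

/-- For every non-degenerate Farey word `s`, the largest cyclic rotation of `s` is the
reversal of `s`, and the smallest cyclic rotation is `s` itself; in particular `s` is
a Lyndon word. -/
theorem stmt13 (s : List Bool) (h : IsFareyND s) :
    maxRot s = s.reverse ∧ minRot s = s ∧ IsLyndon s := by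
  obtain ⟨⟨n, hs⟩, hlen2⟩ := h
  obtain ⟨hly, hconj⟩ := farey_all n s hs
  have hs'mem : fcomp s ∈ farey n := by
    have h1 : fcomp s ∈ (farey n).map fcomp := List.mem_map_of_mem hs
    rw [farey_symm] at h1
    exact List.mem_reverse.mp h1
  obtain ⟨hly', hconj'⟩ := farey_all n (fcomp s) hs'mem
  have hlen' : (fcomp s).length = s.length := by simp [fcomp]
  obtain ⟨k', hk'le, hk'⟩ := hconj'
  have aux : ∀ i, i ≤ s.length → rot s i ≤ s.reverse := by
    intro i hi
    have h1 : (fcomp s).reverse = s.map not := by simp [fcomp]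
    obtain ⟨c, hc, hcc⟩ := rot_rot (w := fcomp s) (a := k') (b := i) hk'le (hlen' ▸ hi)
    have h5 : fcomp s ≤ (rot s i).map not := by
      rw [← rot_map_not, ← h1, ← hk', hcc]
      exact lyndon_le_rot hly' c
    have h6 := comp_le (x := fcomp s) (y := (rot s i).map not)
      (by simp [rot_length, hlen']) h5
    have h7 : ((rot s i).map not).map not = rot s i := by
      simp [List.map_map, Function.comp_def, Bool.not_not]
    have h8 : (fcomp s).map not = s.reverse := by
      simp [fcomp, List.map_map, Function.comp_def, Bool.not_not]
    rw [h7, h8] at h6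
    exact h6
  have hminrot : minRot s = s := by
    unfold minRot
    apply foldl_min_eq
    intro i _
    exact lyndon_le_rot hly i
  have hmaxrot : maxRot s = s.reverse := by
    unfold maxRot
    obtain ⟨k, hkle, hk⟩ := hconj
    apply le_antisymm
    · apply foldl_max_le
      · have := aux 0 (Nat.zero_le _)
        rwa [rot_zero] at this
      · intro i hi
        exact aux i (le_of_lt (List.mem_range.mp hi))
    · apply le_foldl_max
      rcases eq_or_lt_of_le hkle with heq | hklt
      · left
        have he : rot s k = s := rot_full (le_of_eq heq.symm)
        rw [← hk, he]
      · right
        exact ⟨k, List.mem_range.mpr hklt, le_of_eq hk.symm⟩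
  exact ⟨hmaxrot, hminrot, hly⟩
end

section
/- Every non-degenerate Farey word is of exactly one of the following forms: (i) 01^p or 0^p 1 for some p ≥ 1; (ii) 01^p 01^{p+t_1} … 01^{p+t_N} 01^{p+1} for some p ≥ 1 and some non-degenerate Farey word 0 t_1 … t_N 1; (iii) 0^{p+1} 1 0^{p+t_1} 1 … 0^{p+t_N} 1 0^p 1 for some p ≥ 1 and some non-degenerate Farey word 0 t_1 … t_N 1. Conversely, every word of one of these forms is a non-degenerate Farey word. -/
/-- Form (i): `s = 01^p` or `s = 0^p 1` for some `p ≥ 1`. -/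
def FormI (s : List Bool) : Prop :=
  ∃ p : ℕ, 1 ≤ p ∧
    (s = false :: List.replicate p true ∨ s = List.replicate p false ++ [true])

/-- Form (ii): `s = 01^p 01^{p+t_1} … 01^{p+t_N} 01^{p+1}` for some `p ≥ 1` and a
non-degenerate Farey word `0 t_1 … t_N 1`. -/
def FormII (s : List Bool) : Prop :=
  ∃ (p : ℕ) (t : List Bool), 1 ≤ p ∧ IsFareyND (false :: (t ++ [true])) ∧
    s = (false :: List.replicate p true) ++
        (t.map fun b => false :: List.replicate (p + b.toNat) true).flatten ++
        (false :: List.replicate (p + 1) true)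

/-- Form (iii): `s = 0^{p+1} 1 0^{p+t_1} 1 … 0^{p+t_N} 1 0^p 1` for some `p ≥ 1` and a
non-degenerate Farey word `0 t_1 … t_N 1`. -/
def FormIII (s : List Bool) : Prop :=
  ∃ (p : ℕ) (t : List Bool), 1 ≤ p ∧ IsFareyND (false :: (t ++ [true])) ∧
    s = (List.replicate (p + 1) false ++ [true]) ++
        (t.map fun b => List.replicate (p + b.toNat) false ++ [true]).flatten ++
        (List.replicate p false ++ [true])

def subst (f : Bool → List Bool) (w : List Bool) : List Bool := (w.map f).flatten
@[simp] lemma subst_nil (f : Bool → List Bool) : subst f [] = [] := rfl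
@[simp] lemma subst_cons (f : Bool → List Bool) (b w) : subst f (b :: w) = f b ++ subst f w := rfl
@[simp] lemma subst_append (f : Bool → List Bool) (u v) :
    subst f (u ++ v) = subst f u ++ subst f v := by simp [subst]



lemma fareyStep_head_s14 (x : List Bool) (l : List (List Bool)) :
    ∃ r, fareyStep (x :: l) = x :: r := by
  cases l with
  | nil => exact ⟨[], rfl⟩
  | cons v rest => exact ⟨_, rfl⟩

lemma fareyStep_concat : ∀ (A : List (List Bool)) (x : List Bool),
    ∃ B, fareyStep (A ++ [x]) = B ++ [x]
  | [], x => ⟨[], rfl⟩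
  | [a], x => ⟨[a, a ++ x], rfl⟩
  | a :: a' :: A'', x => by
      obtain ⟨B, hB⟩ := fareyStep_concat (a' :: A'') x
      exact ⟨a :: (a ++ a') :: B, by simp only [List.cons_append] at hB ⊢; simp [fareyStep, hB]⟩

lemma fareyStep_map (f : Bool → List Bool) : ∀ l : List (List Bool),
    fareyStep (l.map (subst f)) = (fareyStep l).map (subst f)
  | [] => rfl
  | [w] => rfl
  | w :: v :: rest => by
      have ih := fareyStep_map f (v :: rest)
      simp only [List.map_cons] at ih ⊢
      simp [fareyStep, ih, ← subst_append]

lemma fareyStep_append : ∀ (A : List (List Bool)) (x : List Bool) (B : List (List Bool)),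
    fareyStep (A ++ x :: B) = fareyStep (A ++ [x]) ++ (fareyStep (x :: B)).tail
  | [], x, B => by
      obtain ⟨r, hr⟩ := fareyStep_head_s14 x B
      simp [fareyStep, hr]
  | [a], x, B => by
      obtain ⟨r, hr⟩ := fareyStep_head_s14 x B
      simp [fareyStep, hr]
  | a :: a' :: A'', x, B => by
      have ih := fareyStep_append (a' :: A'') x B
      simp only [List.cons_append, List.append_eq, fareyStep] at ih ⊢
      rw [ih]

def g0 : Bool → List Bool := fun b => if b then [false, true] else [false]
def g1 : Bool → List Bool := fun b => if b then [true] else [false, true]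

lemma farey_head : ∀ n, ∃ r, farey n = [false] :: r
  | 0 => ⟨[[true]], rfl⟩
  | n + 1 => by
      obtain ⟨r, hr⟩ := farey_head n
      obtain ⟨r', hr'⟩ := fareyStep_head_s14 [false] r
      exact ⟨r', by rw [show farey (n+1) = fareyStep (farey n) from rfl, hr, hr']⟩

lemma farey_concat : ∀ n, ∃ A, farey n = A ++ [[true]]
  | 0 => ⟨[[false]], rfl⟩
  | n + 1 => by
      obtain ⟨A, hA⟩ := farey_concat n
      obtain ⟨B, hB⟩ := fareyStep_concat A [true]
      exact ⟨B, by rw [show farey (n+1) = fareyStep (farey n) from rfl, hA, hB]⟩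

lemma farey_decomp : ∀ n, farey (n + 1) =
    (farey n).map (subst g0) ++ ((farey n).map (subst g1)).tail
  | 0 => by decide
  | n + 1 => by
      obtain ⟨r, hr⟩ := farey_head n
      obtain ⟨A, hA⟩ := farey_concat n
      have h1 : subst g0 [true] = [false, true] := by decide
      have h2 : subst g1 [false] = [false, true] := by decide
      have key : (farey n).map (subst g0) ++ ((farey n).map (subst g1)).tail
          = (A.map (subst g0)) ++ [false, true] :: (r.map (subst g1)) := by
        nth_rewrite 1 [hA]
        rw [hr]
        simp only [List.map_append, List.map_cons, List.tail_cons, h1, h2]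
        simp [List.append_assoc]
      calc farey (n + 2) = fareyStep (farey (n + 1)) := rfl
        _ = fareyStep ((farey n).map (subst g0) ++ ((farey n).map (subst g1)).tail) := by
              rw [← farey_decomp n]
        _ = fareyStep ((A.map (subst g0)) ++ [false, true] :: (r.map (subst g1))) := by rw [key]
        _ = fareyStep ((A.map (subst g0)) ++ [[false, true]])
              ++ (fareyStep ([false, true] :: (r.map (subst g1)))).tail := fareyStep_append _ _ _
        _ = fareyStep ((farey n).map (subst g0))
              ++ (fareyStep ((farey n).map (subst g1))).tail := by
              nth_rewrite 1 [hA]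
              rw [hr]
              simp only [List.map_append, List.map_cons, List.map_nil, h1, h2]
        _ = (fareyStep (farey n)).map (subst g0)
              ++ ((fareyStep (farey n)).map (subst g1)).tail := by
              rw [fareyStep_map, fareyStep_map]
        _ = (farey (n+1)).map (subst g0) ++ ((farey (n+1)).map (subst g1)).tail := rfl

inductive Cl : List Bool → Prop
  | base : Cl [false, true]
  | u0 : ∀ {w}, Cl w → Cl (subst g0 w)
  | u1 : ∀ {w}, Cl w → Cl (subst g1 w)

lemma g0_ne_nil : ∀ b, g0 b ≠ [] := by decide
lemma g1_ne_nil : ∀ b, g1 b ≠ [] := by decide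

lemma length_le_subst {f : Bool → List Bool} (hf : ∀ b, f b ≠ []) (w : List Bool) :
    w.length ≤ (subst f w).length := by
  induction w with
  | nil => simp
  | cons b w ih =>
      have := List.length_pos_iff.mpr (hf b)
      simp only [subst_cons, List.length_cons, List.length_append]
      omega

lemma Cl.length_ge {w : List Bool} (h : Cl w) : 2 ≤ w.length := by
  induction h with
  | base => simp
  | u0 h ih => exact le_trans ih (length_le_subst g0_ne_nil _)
  | u1 h ih => exact le_trans ih (length_le_subst g1_ne_nil _)


lemma farey_cases {w : List Bool} {n : ℕ} (h : w ∈ farey (n + 1)) :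
    (∃ v ∈ farey n, w = subst g0 v) ∨ (∃ v ∈ farey n, w = subst g1 v) := by
  rw [farey_decomp n] at h
  rcases List.mem_append.mp h with h | h
  · obtain ⟨v, hv, rfl⟩ := List.mem_map.mp h
    exact Or.inl ⟨v, hv, rfl⟩
  · obtain ⟨v, hv, rfl⟩ := List.mem_map.mp (List.mem_of_mem_tail h)
    exact Or.inr ⟨v, hv, rfl⟩

lemma farey_elim : ∀ n, ∀ w ∈ farey n, w = [false] ∨ w = [true] ∨ Cl w
  | 0, w, h => by
      have h' : w = [false] ∨ w = [true] := by simpa [farey] using h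
      rcases h' with rfl | rfl
      · exact Or.inl rfl
      · exact Or.inr (Or.inl rfl)
  | n + 1, w, h => by
      rcases farey_cases h with ⟨v, hv, rfl⟩ | ⟨v, hv, rfl⟩ <;>
        rcases farey_elim n v hv with rfl | rfl | hc
      · exact Or.inl (by decide)
      · exact Or.inr (Or.inr (by have : subst g0 [true] = [false, true] := by decide
                                 rw [this]; exact Cl.base))
      · exact Or.inr (Or.inr (Cl.u0 hc))
      · exact Or.inr (Or.inr (by have : subst g1 [false] = [false, true] := by decide
                                 rw [this]; exact Cl.base))
      · exact Or.inr (Or.inl (by decide))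
      · exact Or.inr (Or.inr (Cl.u1 hc))

lemma mem_farey_u0 {v : List Bool} {n : ℕ} (h : v ∈ farey n) :
    subst g0 v ∈ farey (n + 1) := by
  rw [farey_decomp n]
  exact List.mem_append.mpr (Or.inl (List.mem_map.mpr ⟨v, h, rfl⟩))

lemma mem_farey_u1 {v : List Bool} {n : ℕ} (h : v ∈ farey n) (hne : v ≠ [false]) :
    subst g1 v ∈ farey (n + 1) := by
  obtain ⟨r, hr⟩ := farey_head n
  rw [farey_decomp n, hr]
  rw [hr] at h
  rcases List.mem_cons.mp h with rfl | h
  · exact absurd rfl hne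
  · simp only [List.map_cons, List.tail_cons]
    exact List.mem_append.mpr (Or.inr (List.mem_map.mpr ⟨v, h, rfl⟩))

lemma Cl.isFareyND {w : List Bool} (h : Cl w) : IsFareyND w := by
  refine ⟨?_, h.length_ge⟩
  induction h with
  | base => exact ⟨1, by decide⟩
  | @u0 w h ih => obtain ⟨n, hn⟩ := ih; exact ⟨n + 1, mem_farey_u0 hn⟩
  | @u1 w h ih =>
      obtain ⟨n, hn⟩ := ih
      refine ⟨n + 1, mem_farey_u1 hn ?_⟩
      intro hfalse
      have := h.length_ge
      rw [hfalse] at this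
      simp at this

lemma IsFareyND.cl {w : List Bool} (h : IsFareyND w) : Cl w := by
  obtain ⟨⟨n, hn⟩, hl⟩ := h
  rcases farey_elim n w hn with rfl | rfl | hc
  · simp at hl
  · simp at hl
  · exact hc

lemma subst_subst (f g : Bool → List Bool) (w : List Bool) :
    subst f (subst g w) = subst (fun b => subst f (g b)) w := by
  induction w with
  | nil => rfl
  | cons b w ih => simp [ih]

lemma subst_congr {f g : Bool → List Bool} (h : ∀ b, f b = g b) (w : List Bool) :
    subst f w = subst g w := by
  induction w with
  | nil => rfl
  | cons b w ih => simp [ih, h]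

lemma subst_map (f : Bool → List Bool) (g : Bool → Bool) (w : List Bool) :
    subst f (w.map g) = subst (fun b => f (g b)) w := by
  induction w with
  | nil => rfl
  | cons b w ih => simp [ih]

lemma reverse_subst (f : Bool → List Bool) (w : List Bool) :
    (subst f w).reverse = subst (fun b => (f b).reverse) w.reverse := by
  induction w with
  | nil => rfl
  | cons b w ih => simp [ih]

lemma map_not_subst (f : Bool → List Bool) (w : List Bool) :
    (subst f w).map not = subst (fun b => (f b).map not) w := by
  induction w with
  | nil => rfl
  | cons b w ih => simp [ih]

def g0' : Bool → List Bool := fun b => if b then [true, false] else [false]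
def g1' : Bool → List Bool := fun b => if b then [true] else [true, false]

lemma shiftA : ∀ t : List Bool, false :: subst g0' t = subst g0 t ++ [false]
  | [] => rfl
  | b :: t => by
      cases b <;> simp [g0, g0', ← shiftA t] <;> simp [subst_cons, g0']

lemma shiftB : ∀ t : List Bool, subst g1' t ++ [true] = true :: subst g1 t
  | [] => rfl
  | b :: t => by
      cases b <;> simp [g1, g1', shiftB t] <;> simp [subst_cons, g1']

lemma Cl.shape {w : List Bool} (h : Cl w) :
    ∃ t, w = false :: (t ++ [true]) ∧ t.reverse = t := by
  induction h with
  | base => exact ⟨[], rfl, rfl⟩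
  | @u0 w h ih =>
      obtain ⟨t, rfl, hpal⟩ := ih
      refine ⟨subst g0 t ++ [false], ?_, ?_⟩
      · simp [g0, List.append_assoc]
      · rw [List.reverse_append, List.reverse_cons, reverse_subst, hpal]
        have : subst (fun b => (g0 b).reverse) t = subst g0' t :=
          subst_congr (by decide) t
        simp only [this]
        simpa using shiftA t
  | @u1 w h ih =>
      obtain ⟨t, rfl, hpal⟩ := ih
      refine ⟨true :: subst g1 t, ?_, ?_⟩
      · simp [g1, List.append_assoc]
      · rw [List.reverse_cons, reverse_subst, hpal]
        have : subst (fun b => (g1 b).reverse) t = subst g1' t :=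
          subst_congr (by decide) t
        simp only [this]
        exact shiftB t

lemma Cl.revcomp {w : List Bool} (h : Cl w) : Cl ((w.map not).reverse) := by
  induction h with
  | base => exact Cl.base
  | @u0 w h ih =>
      have e : ((subst g0 w).map not).reverse = subst g1 ((w.map not).reverse) := by
        rw [map_not_subst, reverse_subst, ← List.map_reverse, subst_map]
        exact (subst_congr (by decide) _).symm
      rw [e]; exact Cl.u1 ih
  | @u1 w h ih =>
      have e : ((subst g1 w).map not).reverse = subst g0 ((w.map not).reverse) := by
        rw [map_not_subst, reverse_subst, ← List.map_reverse, subst_map]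
        exact (subst_congr (by decide) _).symm
      rw [e]; exact Cl.u0 ih

lemma Cl.midComp {t : List Bool} (h : Cl (false :: (t ++ [true]))) :
    Cl (false :: (t.map not ++ [true])) := by
  obtain ⟨t', heq, hpal⟩ := h.shape
  have ht : t = t' := by
    have := heq
    simp only [List.cons.injEq] at this
    exact List.append_cancel_right this.2
  subst ht
  have e : (((false :: (t ++ [true])).map not).reverse) = false :: (t.map not ++ [true]) := by
    simp [← List.map_reverse, hpal]
  have := h.revcomp
  rwa [e] at this

def kII (p : ℕ) : Bool → List Bool := fun b => false :: List.replicate (p + b.toNat) true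
def kIII (p : ℕ) : Bool → List Bool := fun b => List.replicate (p + (!b).toNat) false ++ [true]

lemma subst_g1_replicate (k : ℕ) :
    subst g1 (List.replicate k true) = List.replicate k true := by
  induction k with
  | zero => rfl
  | succ k ih => simp [List.replicate_succ, ih, g1]

lemma subst_g0_replicate (k : ℕ) :
    subst g0 (List.replicate k false) = List.replicate k false := by
  induction k with
  | zero => rfl
  | succ k ih => simp [List.replicate_succ, ih, g0]

lemma g1_kII (p : ℕ) (b : Bool) : subst g1 (kII p b) = kII (p + 1) b := by
  cases b <;>
    simp [kII, g1, subst_g1_replicate, List.replicate_succ] <;> ring_nf <;>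
    simp [Nat.add_comm, List.replicate_succ]

lemma g0_kIII (p : ℕ) (b : Bool) : subst g0 (kIII p b) = kIII (p + 1) b := by
  cases b <;>
    simp [kIII, g0, subst_g0_replicate, List.replicate_succ'] <;>
    simp [show p + 1 + 1 = p + 1 + 1 from rfl, List.replicate_succ', List.append_assoc]

lemma iter_kII : ∀ p, ∀ w : List Bool, (subst g1)^[p + 1] (subst g0 w) = subst (kII (p + 1)) w
  | 0, w => by
      rw [Function.iterate_one]
      rw [subst_subst]
      exact subst_congr (by decide) w
  | p + 1, w => by
      rw [Function.iterate_succ_apply', iter_kII p w, subst_subst]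
      exact subst_congr (fun b => g1_kII (p + 1) b) w

lemma iter_kIII : ∀ p, ∀ w : List Bool, (subst g0)^[p + 1] (subst g1 w) = subst (kIII (p + 1)) w
  | 0, w => by
      rw [Function.iterate_one]
      rw [subst_subst]
      exact subst_congr (by decide) w
  | p + 1, w => by
      rw [Function.iterate_succ_apply', iter_kIII p w, subst_subst]
      exact subst_congr (fun b => g0_kIII (p + 1) b) w

lemma Cl.iter0 {w : List Bool} (h : Cl w) (k : ℕ) : Cl ((subst g0)^[k] w) := by
  induction k with
  | zero => exact h
  | succ k ih => rw [Function.iterate_succ_apply']; exact ih.u0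

lemma Cl.iter1 {w : List Bool} (h : Cl w) (k : ℕ) : Cl ((subst g1)^[k] w) := by
  induction k with
  | zero => exact h
  | succ k ih => rw [Function.iterate_succ_apply']; exact ih.u1

lemma Cl_ones : ∀ p, 1 ≤ p → Cl (false :: List.replicate p true) := by
  intro p
  induction p with
  | zero => omega
  | succ p ih =>
      intro _
      rcases Nat.eq_zero_or_pos p with rfl | hp
      · simpa using Cl.base
      · have := (ih hp).u1
        have e : subst g1 (false :: List.replicate p true)
            = false :: List.replicate (p + 1) true := by
          simp [g1, subst_g1_replicate, List.replicate_succ]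
        rwa [e] at this

lemma Cl_zeros : ∀ p, 1 ≤ p → Cl (List.replicate p false ++ [true]) := by
  intro p
  induction p with
  | zero => omega
  | succ p ih =>
      intro _
      rcases Nat.eq_zero_or_pos p with rfl | hp
      · simpa using Cl.base
      · have := (ih hp).u0
        have e : subst g0 (List.replicate p false ++ [true])
            = List.replicate (p + 1) false ++ [true] := by
          simp [g0, subst_g0_replicate, List.replicate_succ', List.append_assoc]
        rwa [e] at this




def FormII' (s : List Bool) : Prop :=
  ∃ p w, 1 ≤ p ∧ Cl w ∧ s = (subst g1)^[p] (subst g0 w)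
def FormIII' (s : List Bool) : Prop :=
  ∃ p w, 1 ≤ p ∧ Cl w ∧ s = (subst g0)^[p] (subst g1 w)

lemma e1 (p : ℕ) : subst g1 (false :: List.replicate p true)
    = false :: List.replicate (p + 1) true := by
  simp [g1, subst_g1_replicate, List.replicate_succ]

lemma e0 (p : ℕ) : subst g0 (List.replicate p false ++ [true])
    = List.replicate (p + 1) false ++ [true] := by
  simp [g0, subst_g0_replicate, List.replicate_succ', List.append_assoc]

lemma Cl.forms {s : List Bool} (h : Cl s) : FormI s ∨ FormII' s ∨ FormIII' s := by
  induction h with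
  | base => exact Or.inl ⟨1, le_refl 1, Or.inl (by simp)⟩
  | @u0 w h ih =>
      rcases ih with ⟨p, hp, hI | hI⟩ | ⟨p, v, hp, hv, rfl⟩ | ⟨p, v, hp, hv, rfl⟩
      · subst hI
        rcases Nat.lt_or_ge p 2 with h2 | h2
        · have hp1 : p = 1 := by omega
          subst hp1
          exact Or.inl ⟨2, by omega, Or.inr (by decide)⟩
        · obtain ⟨q, rfl⟩ : ∃ q, p = q + 1 + 1 := ⟨p - 2, by omega⟩
          right; right
          refine ⟨1, false :: List.replicate (q + 1) true, le_refl 1,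
            Cl_ones _ (by omega), ?_⟩
          rw [Function.iterate_one, e1]
      · subst hI
        exact Or.inl ⟨p + 1, by omega, Or.inr (e0 p)⟩
      · obtain ⟨q, rfl⟩ : ∃ q, p = q + 1 := ⟨p - 1, by omega⟩
        right; right
        refine ⟨1, (subst g1)^[q] (subst g0 v), le_refl 1, (hv.u0).iter1 q, ?_⟩
        rw [Function.iterate_one, Function.iterate_succ_apply']
      · right; right
        exact ⟨p + 1, v, by omega, hv, by rw [Function.iterate_succ_apply']⟩
  | @u1 w h ih =>
      rcases ih with ⟨p, hp, hI | hI⟩ | ⟨p, v, hp, hv, rfl⟩ | ⟨p, v, hp, hv, rfl⟩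
      · subst hI
        exact Or.inl ⟨p + 1, by omega, Or.inl (e1 p)⟩
      · subst hI
        rcases Nat.lt_or_ge p 2 with h2 | h2
        · have hp1 : p = 1 := by omega
          subst hp1
          exact Or.inl ⟨2, by omega, Or.inl (by decide)⟩
        · obtain ⟨q, rfl⟩ : ∃ q, p = q + 1 + 1 := ⟨p - 2, by omega⟩
          right; left
          refine ⟨1, List.replicate (q + 1) false ++ [true], le_refl 1,
            Cl_zeros _ (by omega), ?_⟩
          rw [Function.iterate_one, e0]
      · right; left
        exact ⟨p + 1, v, by omega, hv, by rw [Function.iterate_succ_apply']⟩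
      · obtain ⟨q, rfl⟩ : ∃ q, p = q + 1 := ⟨p - 1, by omega⟩
        right; left
        refine ⟨1, (subst g0)^[q] (subst g1 v), le_refl 1, (hv.u1).iter0 q, ?_⟩
        rw [Function.iterate_one, Function.iterate_succ_apply']

lemma expandII (p : ℕ) (t : List Bool) :
    subst (kII p) (false :: (t ++ [true])) =
      (false :: List.replicate p true) ++
        (t.map fun b => false :: List.replicate (p + b.toNat) true).flatten ++
        (false :: List.replicate (p + 1) true) := by
  show kII p false ++ subst (kII p) (t ++ [true]) = _
  rw [subst_append]
  show kII p false ++ ((t.map (kII p)).flatten ++ (kII p true ++ [])) = _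
  rw [show kII p = (fun b => false :: List.replicate (p + b.toNat) true) from rfl]
  simp [List.append_assoc]

lemma expandIII (p : ℕ) (t : List Bool) :
    subst (kIII p) (false :: (t ++ [true])) =
      (List.replicate (p + 1) false ++ [true]) ++
        ((t.map not).map fun b => List.replicate (p + b.toNat) false ++ [true]).flatten ++
        (List.replicate p false ++ [true]) := by
  show kIII p false ++ subst (kIII p) (t ++ [true]) = _
  rw [subst_append]
  show kIII p false ++ ((t.map (kIII p)).flatten ++ (kIII p true ++ [])) = _
  rw [List.map_map]
  have : ((fun b => List.replicate (p + b.toNat) false ++ [true]) ∘ not) = kIII p := by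
    funext b; rfl
  rw [this]
  simp [kIII, List.append_assoc]

lemma FormII'.formII {s : List Bool} (h : FormII' s) : FormII s := by
  obtain ⟨p, w, hp, hw, rfl⟩ := h
  obtain ⟨t, rfl, -⟩ := hw.shape
  obtain ⟨q, rfl⟩ : ∃ q, p = q + 1 := ⟨p - 1, by omega⟩
  exact ⟨q + 1, t, by omega, hw.isFareyND, by rw [iter_kII, expandII]⟩

lemma FormII.formII' {s : List Bool} (h : FormII s) : FormII' s := by
  obtain ⟨p, t, hp, hnd, rfl⟩ := h
  obtain ⟨q, rfl⟩ : ∃ q, p = q + 1 := ⟨p - 1, by omega⟩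
  exact ⟨q + 1, false :: (t ++ [true]), by omega, hnd.cl, by rw [iter_kII, expandII]⟩

lemma FormIII'.formIII {s : List Bool} (h : FormIII' s) : FormIII s := by
  obtain ⟨p, w, hp, hw, rfl⟩ := h
  obtain ⟨t, rfl, -⟩ := hw.shape
  obtain ⟨q, rfl⟩ : ∃ q, p = q + 1 := ⟨p - 1, by omega⟩
  exact ⟨q + 1, t.map not, by omega, hw.midComp.isFareyND, by rw [iter_kIII, expandIII]⟩

lemma FormIII.formIII' {s : List Bool} (h : FormIII s) : FormIII' s := by
  obtain ⟨p, t, hp, hnd, rfl⟩ := h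
  obtain ⟨q, rfl⟩ : ∃ q, p = q + 1 := ⟨p - 1, by omega⟩
  refine ⟨q + 1, false :: (t.map not ++ [true]), by omega, hnd.cl.midComp, ?_⟩
  rw [iter_kIII, expandIII]
  simp [List.map_map, Function.comp_def]

lemma FormI.counts {s : List Bool} (h : FormI s) :
    List.count false s = 1 ∨ List.count true s = 1 := by
  obtain ⟨p, hp, rfl | rfl⟩ := h
  · left; simp [List.count_cons, List.count_replicate]
  · right; simp [List.count_append, List.count_replicate]

lemma FormII.counts {s : List Bool} (h : FormII s) :
    2 ≤ List.count false s ∧ 2 ≤ List.count true s := by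
  obtain ⟨p, t, hp, -, rfl⟩ := h
  constructor <;>
    simp [List.count_append, List.count_cons, List.count_replicate] <;> omega

lemma FormIII.counts {s : List Bool} (h : FormIII s) :
    2 ≤ List.count false s ∧ 2 ≤ List.count true s := by
  obtain ⟨p, t, hp, -, rfl⟩ := h
  constructor <;>
    simp [List.count_append, List.count_cons, List.count_replicate] <;> omega

lemma FormII.second {s : List Bool} (h : FormII s) : ∃ l, s = false :: true :: l := by
  obtain ⟨p, t, hp, -, rfl⟩ := h
  obtain ⟨q, rfl⟩ : ∃ q, p = q + 1 := ⟨p - 1, by omega⟩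
  refine ⟨List.replicate q true ++
      ((t.map fun b => false :: List.replicate (q + 1 + b.toNat) true).flatten ++
        (false :: List.replicate (q + 1 + 1) true)), ?_⟩
  simp [List.replicate_succ, List.append_assoc]

lemma FormIII.second {s : List Bool} (h : FormIII s) : ∃ l, s = false :: false :: l := by
  obtain ⟨p, t, hp, -, rfl⟩ := h
  obtain ⟨q, rfl⟩ : ∃ q, p = q + 1 := ⟨p - 1, by omega⟩
  refine ⟨List.replicate q false ++ ([true] ++
      ((t.map fun b => List.replicate (q + 1 + b.toNat) false ++ [true]).flatten ++
        (List.replicate (q + 1) false ++ [true]))), ?_⟩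
  simp [List.replicate_succ, List.append_assoc]

lemma not_II_of_I {s : List Bool} (h : FormI s) : ¬ FormII s := fun h2 => by
  rcases h.counts with h1 | h1 <;> have := h2.counts <;> omega

lemma not_III_of_I {s : List Bool} (h : FormI s) : ¬ FormIII s := fun h2 => by
  rcases h.counts with h1 | h1 <;> have := h2.counts <;> omega

lemma not_III_of_II {s : List Bool} (h : FormII s) : ¬ FormIII s := fun h2 => by
  obtain ⟨l, hl⟩ := h.second
  obtain ⟨l', hl'⟩ := h2.second
  rw [hl] at hl'
  simp at hl'

/-- Every non-degenerate Farey word is of exactly one of the forms (i), (ii), (iii),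
and conversely every word of one of these forms is a non-degenerate Farey word. -/
theorem stmt14 (s : List Bool) :
    (IsFareyND s →
      (FormI s ∧ ¬FormII s ∧ ¬FormIII s) ∨
      (¬FormI s ∧ FormII s ∧ ¬FormIII s) ∨
      (¬FormI s ∧ ¬FormII s ∧ FormIII s)) ∧
    ((FormI s ∨ FormII s ∨ FormIII s) → IsFareyND s) := by
  constructor
  · intro hnd
    rcases hnd.cl.forms with hI | hII' | hIII'
    · exact Or.inl ⟨hI, not_II_of_I hI, not_III_of_I hI⟩
    · have hII := hII'.formII
      exact Or.inr (Or.inl ⟨fun hI => not_II_of_I hI hII, hII, not_III_of_II hII⟩)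
    · have hIII := hIII'.formIII
      exact Or.inr (Or.inr ⟨fun hI => not_III_of_I hI hIII,
        fun hII => not_III_of_II hII hIII, hIII⟩)
  · rintro (⟨p, hp, rfl | rfl⟩ | hII | hIII)
    · exact (Cl_ones p hp).isFareyND
    · exact (Cl_zeros p hp).isFareyND
    · obtain ⟨p, w, hp, hw, rfl⟩ := hII.formII'
      exact ((hw.u0).iter1 p).isFareyND
    · obtain ⟨p, w, hp, hw, rfl⟩ := hIII.formIII'
      exact ((hw.u1).iter0 p).isFareyND
end

section
/- Let f_m denote the number of ordered factorizations of a positive integer m into factors each at least 2 (with f_1 = 1 counting the empty factorization). Then f_m ≤ m² for all m ≥ 1. -/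
open Finset

private lemma sumInv : ∀ n : ℕ, 1 ≤ n → ∑ d ∈ Finset.Icc 2 n, (1:ℝ)/(d:ℝ)^2 ≤ 1 - 1/n := by
  intro n hn
  induction n, hn using Nat.le_induction with
  | base => simp
  | succ k hk ih =>
    rw [Finset.sum_Icc_succ_top (by omega)]
    have hk0 : (0:ℝ) < k := by exact_mod_cast hk
    have h1 : (1:ℝ)/((k:ℝ)+1)^2 ≤ 1/k - 1/(k+1) := by
      rw [div_sub_div _ _ (ne_of_gt hk0) (by positivity)]
      rw [div_le_div_iff₀ (by positivity) (by positivity)]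
      ring_nf
      nlinarith
    push_cast
    linarith

private lemma sumBound (m : ℕ) (hm : 2 ≤ m) :
    ∑ d ∈ m.divisors.filter (fun d => 2 ≤ d), (m / d) ^ 2 ≤ m ^ 2 := by
  have hsub : m.divisors.filter (fun d => 2 ≤ d) ⊆ Finset.Icc 2 m := by
    intro d hd
    simp only [Finset.mem_filter, Nat.mem_divisors] at hd
    exact Finset.mem_Icc.2 ⟨hd.2, Nat.le_of_dvd (by omega) hd.1.1⟩
  have hcast : ((∑ d ∈ m.divisors.filter (fun d => 2 ≤ d), (m / d) ^ 2 : ℕ) : ℝ) ≤ (m:ℝ)^2 := by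
    push_cast
    calc ∑ d ∈ m.divisors.filter (fun d => 2 ≤ d), ((m / d : ℕ) : ℝ)^2
        ≤ ∑ d ∈ m.divisors.filter (fun d => 2 ≤ d), (m:ℝ)^2 * (1/(d:ℝ)^2) := by
          apply Finset.sum_le_sum
          intro d hd
          have hd2 : 2 ≤ d := (Finset.mem_filter.1 hd).2
          have hle : ((m / d : ℕ) : ℝ) ≤ (m:ℝ)/(d:ℝ) := Nat.cast_div_le
          have hd0 : (0:ℝ) < d := by exact_mod_cast (by omega : 0 < d)
          calc ((m / d : ℕ) : ℝ)^2 ≤ ((m:ℝ)/(d:ℝ))^2 :=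
                pow_le_pow_left₀ (by positivity) hle 2
            _ = (m:ℝ)^2 * (1/(d:ℝ)^2) := by field_simp
      _ ≤ ∑ d ∈ Finset.Icc 2 m, (m:ℝ)^2 * (1/(d:ℝ)^2) := by
          apply Finset.sum_le_sum_of_subset_of_nonneg hsub
          intro d hd _
          have hd2 := (Finset.mem_Icc.1 hd).1
          have hd0 : (0:ℝ) < d := by exact_mod_cast (by omega : 0 < d)
          positivity
      _ = (m:ℝ)^2 * ∑ d ∈ Finset.Icc 2 m, (1/(d:ℝ)^2) := by rw [Finset.mul_sum]
      _ ≤ (m:ℝ)^2 * 1 := by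
          apply mul_le_mul_of_nonneg_left _ (by positivity)
          refine (sumInv m (by omega)).trans ?_
          have hm0 : (0:ℝ) < m := by exact_mod_cast (by omega : 0 < m)
          have : (0:ℝ) ≤ 1/(m:ℝ) := by positivity
          linarith
      _ = (m:ℝ)^2 := mul_one _
  exact_mod_cast hcast

private lemma ncard_biUnion_le {α ι : Type*} (s : Finset ι) (t : ι → Set α)
    (h : ∀ i ∈ s, (t i).Finite) :
    (⋃ i ∈ s, t i).ncard ≤ ∑ i ∈ s, (t i).ncard := by
  classical
  revert h
  induction s using Finset.induction_on with
  | empty => simp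
  | insert a s ha ih =>
    intro h
    rw [Finset.sum_insert ha, Finset.set_biUnion_insert]
    refine (Set.ncard_union_le _ _).trans ?_
    have := ih (fun i hi => h i (Finset.mem_insert_of_mem hi))
    omega

private lemma main : ∀ m : ℕ, 1 ≤ m →
    {l : List ℕ | (∀ x ∈ l, 2 ≤ x) ∧ l.prod = m}.Finite ∧
    {l : List ℕ | (∀ x ∈ l, 2 ≤ x) ∧ l.prod = m}.ncard ≤ m ^ 2 := by
  intro m
  induction m using Nat.strong_induction_on with
  | _ m IH =>
  intro hm
  rcases eq_or_lt_of_le hm with h1 | h2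
  · -- m = 1
    subst h1
    have hset : {l : List ℕ | (∀ x ∈ l, 2 ≤ x) ∧ l.prod = 1} = {[]} := by
      ext l
      simp only [Set.mem_setOf_eq, Set.mem_singleton_iff]
      constructor
      · rintro ⟨h2x, hp⟩
        cases l with
        | nil => rfl
        | cons a t =>
          have ha2 := h2x a (by simp)
          have had : a ∣ 1 := ⟨t.prod, by rw [← hp]; simp⟩
          have := Nat.le_of_dvd one_pos had
          omega
      · rintro rfl
        exact ⟨by simp, by simp⟩
    rw [hset]
    exact ⟨Set.finite_singleton _, by simp⟩
  · -- m ≥ 2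
    have hm0 : 0 < m := by omega
    set D := m.divisors.filter (fun d => 2 ≤ d) with hD
    have hdiv : ∀ d ∈ D, d ∣ m ∧ 2 ≤ d := by
      intro d hd
      simp only [hD, Finset.mem_filter, Nat.mem_divisors] at hd
      exact ⟨hd.1.1, hd.2⟩
    have hIH : ∀ d ∈ D, {l : List ℕ | (∀ x ∈ l, 2 ≤ x) ∧ l.prod = m / d}.Finite ∧
        {l : List ℕ | (∀ x ∈ l, 2 ≤ x) ∧ l.prod = m / d}.ncard ≤ (m / d) ^ 2 := by
      intro d hd
      obtain ⟨hdvd, hd2⟩ := hdiv d hd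
      have hlt : m / d < m := Nat.div_lt_self hm0 (by omega)
      have hge : 1 ≤ m / d := Nat.one_le_div_iff (by omega) |>.2 (Nat.le_of_dvd hm0 hdvd)
      exact IH _ hlt hge
    have hsub : {l : List ℕ | (∀ x ∈ l, 2 ≤ x) ∧ l.prod = m} ⊆
        ⋃ d ∈ D, (fun l => d :: l) '' {l : List ℕ | (∀ x ∈ l, 2 ≤ x) ∧ l.prod = m / d} := by
      rintro l ⟨h2x, hp⟩
      cases l with
      | nil => simp at hp; omega
      | cons a t =>
        have ha2 : 2 ≤ a := h2x a (by simp)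
        have hat : a * t.prod = m := by simpa using hp
        have hadvd : a ∣ m := ⟨t.prod, hat.symm⟩
        have haD : a ∈ D := by
          simp only [hD, Finset.mem_filter, Nat.mem_divisors]
          exact ⟨⟨hadvd, by omega⟩, ha2⟩
        have htprod : t.prod = m / a := by
          rw [← hat, Nat.mul_div_cancel_left _ (by omega)]
        refine Set.mem_biUnion haD ⟨t, ⟨fun x hx => h2x x (by simp [hx]), htprod⟩, rfl⟩
    have hfinU : (⋃ d ∈ D, (fun l => d :: l) ''
        {l : List ℕ | (∀ x ∈ l, 2 ≤ x) ∧ l.prod = m / d}).Finite :=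
      Set.Finite.biUnion D.finite_toSet (fun d hd => ((hIH d hd).1).image _)
    have hfin : {l : List ℕ | (∀ x ∈ l, 2 ≤ x) ∧ l.prod = m}.Finite := hfinU.subset hsub
    refine ⟨hfin, ?_⟩
    calc {l : List ℕ | (∀ x ∈ l, 2 ≤ x) ∧ l.prod = m}.ncard
        ≤ (⋃ d ∈ D, (fun l => d :: l) ''
            {l : List ℕ | (∀ x ∈ l, 2 ≤ x) ∧ l.prod = m / d}).ncard :=
          Set.ncard_le_ncard hsub hfinU
      _ ≤ ∑ d ∈ D, ((fun l => d :: l) ''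
            {l : List ℕ | (∀ x ∈ l, 2 ≤ x) ∧ l.prod = m / d}).ncard :=
          ncard_biUnion_le D _ (fun d hd => ((hIH d hd).1).image _)
      _ = ∑ d ∈ D, {l : List ℕ | (∀ x ∈ l, 2 ≤ x) ∧ l.prod = m / d}.ncard := by
          apply Finset.sum_congr rfl
          intro d _
          exact Set.ncard_image_of_injective _ (List.cons_injective)
      _ ≤ ∑ d ∈ D, (m / d) ^ 2 := Finset.sum_le_sum (fun d hd => (hIH d hd).2)
      _ ≤ m ^ 2 := sumBound m (by omega)

/-- The number `f_m` of ordered factorizations of `m` into factors `≥ 2` (with the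
empty factorization counting for `m = 1`) satisfies `f_m ≤ m²`. -/
theorem stmt15 (m : ℕ) (hm : 1 ≤ m) :
    Nat.card {l : List ℕ // (∀ x ∈ l, 2 ≤ x) ∧ l.prod = m} ≤ m ^ 2 := by
  have h := (main m hm).2
  rwa [← Nat.card_coe_set_eq] at h
end
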